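/- arXiv:2003.08457 — 3 statements merged into one kernel-verified Lean document; each statement's English description precedes it below -/
import Mathlib

section
/- Let μ ∈ (0,1) and define v(t,x) = −(1−μ)t for x ≥ (1−μ)t, v(t,x) = −(1−μ²)t + μx for −μt ≤ x ≤ (1−μ)t, and v(t,x) = −t for x ≤ −μt. Then at every point (t,x) with t > 0, x > 0 and x ≠ (1−μ)t, v is differentiable and satisfies v_t + max{1−μ − μ·v_x, 1−μ + (1−μ)·v_x} = 0. -/
noncomputable def vSol (μ : ℝ) (p : ℝ × ℝ) : ℝ :=
  if p.2 ≥ (1 - μ) * p.1 then -(1 - μ) * p.1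
  else if p.2 ≥ -μ * p.1 then -(1 - μ^2) * p.1 + μ * p.2
  else -p.1

theorem vSol_solves_H1 (μ : ℝ) (hμ : μ ∈ Set.Ioo (0:ℝ) 1) (t x : ℝ)
    (ht : 0 < t) (hx : 0 < x) (hne : x ≠ (1 - μ) * t) :
    ∃ vt vx : ℝ,
      DifferentiableAt ℝ (vSol μ) (t, x) ∧
      HasDerivAt (fun s => vSol μ (s, x)) vt t ∧
      HasDerivAt (fun y => vSol μ (t, y)) vx x ∧
      vt + max (1 - μ - μ * vx) (1 - μ + (1 - μ) * vx) = 0 := by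
  obtain ⟨hμ0, hμ1⟩ := hμ
  rcases lt_or_gt_of_ne hne with hlt | hgt
  · -- x < (1-μ)t : middle region, since x > 0 > -μ t
    set f2 : ℝ × ℝ → ℝ := fun p => -(1 - μ^2) * p.1 + μ * p.2 with hf2
    have hopen : IsOpen {p : ℝ × ℝ | p.2 < (1 - μ) * p.1 ∧ -μ * p.1 < p.2} := by
      apply IsOpen.inter
      · exact isOpen_lt continuous_snd (continuous_const.mul continuous_fst)
      · exact isOpen_lt (continuous_const.mul continuous_fst) continuous_snd
    have hmem : (t, x) ∈ {p : ℝ × ℝ | p.2 < (1 - μ) * p.1 ∧ -μ * p.1 < p.2} := by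
      refine ⟨hlt, ?_⟩
      have : -μ * t < 0 := by nlinarith
      linarith
    have hEq : vSol μ =ᶠ[nhds (t, x)] f2 := by
      filter_upwards [hopen.mem_nhds hmem] with p hp
      have h1 : ¬ (p.2 ≥ (1 - μ) * p.1) := not_le.mpr hp.1
      have h2 : p.2 ≥ -μ * p.1 := le_of_lt hp.2
      simp only [vSol, if_neg h1, if_pos h2, f2]
    have hdf2 : DifferentiableAt ℝ f2 (t, x) := by
      apply DifferentiableAt.add
      · exact (differentiable_fst.const_mul _).differentiableAt
      · exact (differentiable_snd.const_mul _).differentiableAt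
    refine ⟨-(1 - μ^2), μ, hdf2.congr_of_eventuallyEq hEq, ?_, ?_, ?_⟩
    · have hd : HasDerivAt (fun s : ℝ => f2 (s, x)) (-(1 - μ^2)) t := by
        have h := ((hasDerivAt_id t).const_mul (-(1 - μ^2) : ℝ)).add_const (μ * x)
        rw [mul_one] at h
        exact h
      exact hd.congr_of_eventuallyEq
        (hEq.comp_tendsto ((continuous_id.prodMk continuous_const).tendsto t))
    · have hd : HasDerivAt (fun y : ℝ => f2 (t, y)) μ x := by
        have h := ((hasDerivAt_id x).const_mul μ).const_add (-(1 - μ^2) * t)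
        rw [mul_one] at h
        exact h
      exact hd.congr_of_eventuallyEq
        (hEq.comp_tendsto ((continuous_const.prodMk continuous_id).tendsto x))
    · have hmax : max (1 - μ - μ * μ) (1 - μ + (1 - μ) * μ) = 1 - μ^2 := by
        rw [max_eq_right (by nlinarith)]; ring
      rw [hmax]; ring
  · -- x > (1-μ)t : top region
    set f1 : ℝ × ℝ → ℝ := fun p => -(1 - μ) * p.1 with hf1
    have hopen : IsOpen {p : ℝ × ℝ | (1 - μ) * p.1 < p.2} :=
      isOpen_lt (continuous_const.mul continuous_fst) continuous_snd
    have hmem : (t, x) ∈ {p : ℝ × ℝ | (1 - μ) * p.1 < p.2} := hgt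
    have hEq : vSol μ =ᶠ[nhds (t, x)] f1 := by
      filter_upwards [hopen.mem_nhds hmem] with p hp
      simp only [vSol, if_pos (le_of_lt hp), f1]
    have hdf1 : DifferentiableAt ℝ f1 (t, x) :=
      (differentiable_fst.const_mul _).differentiableAt
    refine ⟨-(1 - μ), 0, hdf1.congr_of_eventuallyEq hEq, ?_, ?_, ?_⟩
    · have hd : HasDerivAt (fun s : ℝ => f1 (s, x)) (-(1 - μ)) t := by
        have h := (hasDerivAt_id t).const_mul (-(1 - μ) : ℝ)
        rw [mul_one] at h
        exact h
      exact hd.congr_of_eventuallyEq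
        (hEq.comp_tendsto ((continuous_id.prodMk continuous_const).tendsto t))
    · have hd : HasDerivAt (fun y : ℝ => f1 (t, y)) 0 x := hasDerivAt_const x (-(1 - μ) * t)
      exact hd.congr_of_eventuallyEq
        (hEq.comp_tendsto ((continuous_const.prodMk continuous_id).tendsto x))
    · simp
end

section
/- Let μ ∈ (0,1). For any (α₁, α₂, c) ∈ [0,1]³ with c(α₁ + μ − 1) + (1−c)(α₂ + μ − 1) = 0 and additionally satisfying the regularity condition α₁μ − (1−α₁)(1−μ) ≤ 0 and α₂μ − (1−α₂)(1−μ) ≥ 0, the objective c(1−μ) + (1−c)α₂ is at most 1 − μ²; moreover the value 1−μ² is attained by the regular control (0, 1, μ). Hence H_T^reg = H_T = 1 − μ². -/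
theorem tangential_hamiltonian_regular (μ : ℝ) (hμ : μ ∈ Set.Ioo (0:ℝ) 1) :
    (∀ α₁ ∈ Set.Icc (0:ℝ) 1, ∀ α₂ ∈ Set.Icc (0:ℝ) 1, ∀ c ∈ Set.Icc (0:ℝ) 1,
      c * (α₁ + μ - 1) + (1 - c) * (α₂ + μ - 1) = 0 →
      α₁ * μ - (1 - α₁) * (1 - μ) ≤ 0 →
      α₂ * μ - (1 - α₂) * (1 - μ) ≥ 0 →
      c * (1 - μ) + (1 - c) * α₂ ≤ 1 - μ^2) ∧
    (μ * (0 + μ - 1) + (1 - μ) * (1 + μ - 1) = 0 ∧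
      (0:ℝ) * μ - (1 - 0) * (1 - μ) ≤ 0 ∧
      (1:ℝ) * μ - (1 - 1) * (1 - μ) ≥ 0 ∧
      μ * (1 - μ) + (1 - μ) * 1 = 1 - μ^2) := by
  obtain ⟨hμ0, hμ1⟩ := hμ
  constructor
  · rintro α₁ ⟨h1a, h1b⟩ α₂ ⟨h2a, h2b⟩ c ⟨hca, hcb⟩ heq hr1 hr2
    nlinarith [mul_nonneg hca h2a, mul_nonneg (sub_nonneg.2 hcb) (sub_nonneg.2 h2b),
      mul_nonneg hca (sub_nonneg.2 h1b), sq_nonneg (c - μ), sq_nonneg (α₂ - 1),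
      mul_nonneg (mul_nonneg hca (sub_nonneg.2 h1b)) (le_of_lt hμ0)]
  · refine ⟨by ring, by nlinarith, by nlinarith, by ring⟩
end

section
/- Let μ ∈ (0,1), ε ∈ (0,1), and let V satisfy V(0,ρ) = 0 and V(t+1,ρ) = max{(1−μ+μρ) + μV(t,g(ρ)) + (1−μ)V(t,ρ), (1−μ)(1−ρ) + (1−μ)V(t,g⁻(ρ)) + μV(t,ρ)}. Then for all N ∈ ℕ and ρ ∈ (0,1), V(N,ρ) ≥ N(1−μ) + (1−μ)·Σ_{t=0}^{N−1} μρ_t where ρ_0 = ρ and the sequence alternates as in the lie/truth strategy; in particular liminf_{N→∞} V(N,ρ)/N ≥ 1−μ + μ(1−μ)(ρ − g(ρ)). -/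
/-!
Evaluate the dynamic programme along the strategy that lies at `ρ` and tells the truth at
`g(ρ)`: it moves between these two states, and since `g⁻(g(ρ)) = ρ` the values at the two
states bound each other through a two-state Markov chain with stationary distribution
`(1 - μ, μ)`. Its expected reward grows linearly at the stationary rate
`(1 - μ)(1 + μ(ρ - g(ρ)))`, while each round pays at most `1`, so `V N ρ / N` is bounded and
its liminf is at least that rate.
-/

noncomputable def mwG (ε ρ : ℝ) : ℝ := 1 / (1 + (1/ρ - 1) / ε)
noncomputable def mwGinv (ε ρ : ℝ) : ℝ := 1 / (1 + (1/ρ - 1) * ε)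

/-- Expected-weight contribution sequence of the lie-at-ρ / truth-at-g(ρ) strategy:
at time 0 the chain is at ρ; from time 1 on the expected per-round excess is
μ(ρ − g(ρ)) (stationary distribution (1−μ, μ)). -/
noncomputable def lieTruthSeq (ε ρ : ℝ) : ℕ → ℝ
  | 0 => ρ
  | _ + 1 => ρ - mwG ε ρ

open Finset Filter Set

lemma one_div_one_add_mem_Ioo {x : ℝ} (hx : 0 < x) : 1 / (1 + x) ∈ Ioo (0 : ℝ) 1 :=
  ⟨by positivity, (div_lt_one (by linarith)).2 (by linarith)⟩

lemma one_div_sub_one_pos {ρ : ℝ} (hρ : ρ ∈ Ioo (0 : ℝ) 1) : 0 < 1 / ρ - 1 :=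
  sub_pos.2 (one_lt_one_div hρ.1 hρ.2)

lemma mwG_mem_Ioo {ε ρ : ℝ} (hε : 0 < ε) (hρ : ρ ∈ Ioo (0 : ℝ) 1) :
    mwG ε ρ ∈ Ioo (0 : ℝ) 1 :=
  one_div_one_add_mem_Ioo (div_pos (one_div_sub_one_pos hρ) hε)

lemma mwGinv_mem_Ioo {ε ρ : ℝ} (hε : 0 < ε) (hρ : ρ ∈ Ioo (0 : ℝ) 1) :
    mwGinv ε ρ ∈ Ioo (0 : ℝ) 1 :=
  one_div_one_add_mem_Ioo (mul_pos (one_div_sub_one_pos hρ) hε)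

lemma mwGinv_mwG {ε : ℝ} (hε : ε ≠ 0) (ρ : ℝ) : mwGinv ε (mwG ε ρ) = ρ := by
  rw [mwG, mwGinv, one_div_one_div, add_sub_cancel_left, div_mul_cancel₀ _ hε,
    add_sub_cancel, one_div_one_div]

lemma sum_range_succ_lieTruthSeq (ε ρ : ℝ) (n : ℕ) :
    ∑ t ∈ range (n + 1), lieTruthSeq ε ρ t = ρ + n * (ρ - mwG ε ρ) := by
  simp [sum_range_succ', lieTruthSeq, add_comm, mul_sub]

/-- `u`, `v` dominate the expected rewards of the chain that leaves its first state (reward `p`)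
with probability `μ` and its second (reward `q`) with probability `1 - μ`; its stationary
distribution `(1 - μ, μ)` gives the growth rate `(1 - μ) p + μ q`. -/
theorem two_state_payoff_lower_bound {μ p q : ℝ} {u v : ℕ → ℝ} (hμ0 : 0 ≤ μ) (hμ1 : μ ≤ 1)
    (hu0 : 0 ≤ u 0) (hv0 : 0 ≤ v 0)
    (hu : ∀ t, p + μ * v t + (1 - μ) * u t ≤ u (t + 1))
    (hv : ∀ t, q + (1 - μ) * u t + μ * v t ≤ v (t + 1)) (n : ℕ) :
    p + n * ((1 - μ) * p + μ * q) ≤ u (n + 1) ∧ q + n * ((1 - μ) * p + μ * q) ≤ v (n + 1) := by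
  have hμ1' : 0 ≤ 1 - μ := sub_nonneg.2 hμ1
  induction n with
  | zero =>
    have := hu 0
    have := hv 0
    simp only [Nat.cast_zero, zero_mul, add_zero, zero_add]
    constructor <;> nlinarith [mul_nonneg hμ0 hv0, mul_nonneg hμ1' hu0]
  | succ n ih =>
    have hu' := mul_le_mul_of_nonneg_left ih.1 hμ1'
    have hv' := mul_le_mul_of_nonneg_left ih.2 hμ0
    have := hu (n + 1)
    have := hv (n + 1)
    push_cast
    constructor <;> linarith

lemma le_liminf_div_of_linear_bounds {u : ℕ → ℝ} {c C : ℝ}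
    (hlb : ∀ n : ℕ, c * (n + 1) ≤ u (n + 1)) (hub : ∀ n : ℕ, u (n + 1) ≤ C * (n + 1)) :
    c ≤ liminf (fun N : ℕ => u N / N) atTop := by
  have hdiv : ∀ᶠ N : ℕ in atTop, c ≤ u N / N ∧ u N / N ≤ C := by
    filter_upwards [eventually_ge_atTop 1] with N hN
    obtain ⟨n, rfl⟩ := Nat.exists_eq_add_of_le' hN
    have hpos : (0 : ℝ) < (n + 1 : ℕ) := by positivity
    push_cast at hpos ⊢
    exact ⟨(le_div_iff₀ hpos).2 (hlb n), (div_le_iff₀ hpos).2 (hub n)⟩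
  exact le_liminf_of_le (isCoboundedUnder_ge_of_eventually_le atTop (hdiv.mono fun _ h => h.2))
    (hdiv.mono fun _ h => h.1)

theorem value_le_of_recursion {ε μ : ℝ} (hε : 0 < ε) (hμ : μ ∈ Icc (0 : ℝ) 1)
    {V : ℕ → ℝ → ℝ} (hV0 : ∀ ρ ∈ Ioo (0 : ℝ) 1, V 0 ρ = 0)
    (hVrec : ∀ t, ∀ ρ ∈ Ioo (0 : ℝ) 1,
      V (t+1) ρ = max ((1 - μ + μ * ρ) + μ * V t (mwG ε ρ) + (1 - μ) * V t ρ)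
                      ((1 - μ) * (1 - ρ) + (1 - μ) * V t (mwGinv ε ρ) + μ * V t ρ))
    (t : ℕ) : ∀ ρ ∈ Ioo (0 : ℝ) 1, V t ρ ≤ t := by
  obtain ⟨hμ0, hμ1⟩ := hμ
  induction t with
  | zero => intro ρ hρ; simp [hV0 ρ hρ]
  | succ t ih =>
    intro ρ hρ
    have hg := ih _ (mwG_mem_Ioo hε hρ)
    have hginv := ih _ (mwGinv_mem_Ioo hε hρ)
    have hρt := ih ρ hρ
    rw [hVrec t ρ hρ]
    push_cast
    apply max_le <;> nlinarith [hρ.1, hρ.2]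

theorem value_lower_bound (ε μ : ℝ) (hε : ε ∈ Set.Ioo (0:ℝ) 1)
    (hμ : μ ∈ Set.Ioo (0:ℝ) 1) (V : ℕ → ℝ → ℝ)
    (hV0 : ∀ ρ ∈ Set.Ioo (0:ℝ) 1, V 0 ρ = 0)
    (hVrec : ∀ t, ∀ ρ ∈ Set.Ioo (0:ℝ) 1,
      V (t+1) ρ = max ((1 - μ + μ * ρ) + μ * V t (mwG ε ρ) + (1 - μ) * V t ρ)
                      ((1 - μ) * (1 - ρ) + (1 - μ) * V t (mwGinv ε ρ) + μ * V t ρ)) :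
    ∀ ρ ∈ Set.Ioo (0:ℝ) 1,
      (∀ N : ℕ, V N ρ ≥ N * (1 - μ)
          + (1 - μ) * ∑ t ∈ Finset.range N, μ * lieTruthSeq ε ρ t) ∧
      Filter.atTop.liminf (fun N : ℕ => V N ρ / N)
        ≥ 1 - μ + μ * (1 - μ) * (ρ - mwG ε ρ) := by
  intro ρ hρ
  set g := mwG ε ρ with hg_def
  have hg : g ∈ Ioo (0 : ℝ) 1 := mwG_mem_Ioo hε.1 hρ
  have hlie : ∀ t, (1 - μ + μ * ρ) + μ * V t g + (1 - μ) * V t ρ ≤ V (t + 1) ρ := fun t => by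
    rw [hVrec t ρ hρ]
    exact le_max_left _ _
  have htruth : ∀ t, (1 - μ) * (1 - g) + (1 - μ) * V t ρ + μ * V t g ≤ V (t + 1) g := fun t => by
    rw [hVrec t g hg, hg_def, mwGinv_mwG hε.1.ne']
    exact le_max_right _ _
  have hchain := two_state_payoff_lower_bound (u := fun t => V t ρ) (v := fun t => V t g)
    hμ.1.le hμ.2.le (hV0 ρ hρ).ge (hV0 g hg).ge hlie htruth
  have hρg : 0 ≤ μ * ρ + (1 - μ) * g := by nlinarith [hμ.1, hμ.2, hρ.1, hg.1]
  refine ⟨fun N => ?_, ?_⟩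
  · rcases N with _ | n
    · simp [hV0 ρ hρ]
    · rw [← mul_sum, sum_range_succ_lieTruthSeq]
      push_cast
      -- the chain bound exceeds the claimed one by `μ² ρ`
      nlinarith [(hchain n).1, mul_nonneg (mul_nonneg hμ.1.le hμ.1.le) hρ.1.le]
  · apply le_liminf_div_of_linear_bounds (C := 1)
    · intro n
      nlinarith [(hchain n).1, mul_nonneg hμ.1.le hρg]
    · intro n
      simpa using value_le_of_recursion hε.1 (Ioo_subset_Icc_self hμ) hV0 hVrec (n + 1) ρ hρ
end
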